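/- Let Y be an entrywise nonnegative M × N real matrix with positive integer row weights m_1, …, m_M. The support hypergraph of Y contains a simple cycle if and only if there exists an entrywise nonnegative M × N matrix Y' ≠ Y with the same support as Y (i.e., Y'_{ij} > 0 exactly when Y_{ij} > 0), the same row sums (Σ_j Y'_{ij} = Σ_j Y_{ij} for all i), and the same weighted column sums (Σ_i m_i Y'_{ij} = Σ_i m_i Y_{ij} for all j). -/

import Mathlib

/-!
Both sides are equivalent to the existence of a nonzero matrix `D`, supported in the support
of `Y`, with zero row sums and zero `m`-weighted column sums: `Y' - Y` is such a matrix, and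
conversely `Y + c D` works for small `c > 0`. A simple cycle `v, e` yields `D` by putting
`± 1 / m (e k)` at the two ends of each edge `e k`, with signs alternating around the cycle.
Conversely, from a negative entry of `D` one can always move along its row to a positive entry
and along that column to a negative one; this walk eventually closes up, and a shortest closed
walk of this kind is a simple cycle.
-/

open Finset Function Filter Topology

/-- The support hypergraph of `Y` (vertex set `Fin N`, one edge `{j | 0 < Y i j}` for each
row `i` with at least two positive entries) contains a simple cycle.  Since every edge of
a simple cycle contains two distinct vertices, this is equivalent to the existence of the
following data. -/
def SupportHasSimpleCycle {M N : ℕ} (Y : Fin M → Fin N → ℝ) : Prop :=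
  ∃ ℓ : ℕ, 2 ≤ ℓ ∧ ∃ (v : Fin (ℓ + 1) → Fin N) (e : Fin ℓ → Fin M),
    v (Fin.last ℓ) = v 0 ∧
    (∀ k k' : Fin ℓ, v k.castSucc = v k'.castSucc → k = k') ∧
    Function.Injective e ∧
    ∀ k : Fin ℓ, 0 < Y (e k) (v k.castSucc) ∧ 0 < Y (e k) (v k.succ)

lemma exists_pos_forall_pos_add_mul {α : Type*} [Finite α] (a b : α → ℝ) :
    ∃ c > 0, ∀ x, 0 < a x → 0 < a x + c * b x := by
  have h : ∀ᶠ c in 𝓝[>] (0 : ℝ), ∀ x, 0 < a x → 0 < a x + c * b x := by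
    refine eventually_all.2 fun x => ?_
    by_cases hx : 0 < a x
    · have hcont : Tendsto (fun c : ℝ => a x + c * b x) (𝓝 0) (𝓝 (a x)) := by
        simpa using ((by fun_prop : Continuous fun c : ℝ => a x + c * b x).tendsto 0)
      exact nhdsWithin_le_nhds ((hcont.eventually (lt_mem_nhds hx)).mono fun _ h _ => h)
    · exact Eventually.of_forall fun _ h => absurd h hx
  obtain ⟨c, hc, hpos⟩ := (h.and self_mem_nhdsWithin).exists
  exact ⟨c, hpos, hc⟩

lemma exists_neg_of_sum_eq_zero {α : Type*} [Fintype α] {f : α → ℝ} (hf : ∑ x, f x = 0)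
    {a : α} (ha : 0 < f a) : ∃ x, f x < 0 := by
  obtain ⟨x, -, hx⟩ := exists_pos_of_sum_zero_of_exists_nonzero (fun x => -f x)
    (by rw [sum_neg_distrib, hf, neg_zero]) ⟨a, mem_univ a, by simpa using ha.ne'⟩
  exact ⟨x, neg_pos.1 hx⟩

lemma Function.exists_iterate_eq_self_of_finite {α : Type*} [Finite α] [Nonempty α] (f : α → α) :
    ∃ x, ∃ n > 0, f^[n] x = x := by
  obtain ⟨x⟩ := ‹Nonempty α›
  obtain ⟨a, b, hab, h⟩ := Finite.exists_ne_map_eq_of_infinite fun n : ℕ => f^[n] x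
  wlog hlt : a < b generalizing a b
  · exact this b a hab.symm h.symm (by omega)
  refine ⟨f^[a] x, b - a, by omega, ?_⟩
  rw [← iterate_add_apply, Nat.sub_add_cancel hlt.le]
  exact h.symm

lemma Fin.sum_univ_succ_eq_sum_castSucc {β : Type*} [AddCancelCommMonoid β] {ℓ : ℕ}
    {g : Fin (ℓ + 1) → β} (hg : g (Fin.last ℓ) = g 0) : ∑ k : Fin ℓ, g k.succ = ∑ k : Fin ℓ, g k.castSucc := by
  have h := (Fin.sum_univ_succ g).symm.trans (Fin.sum_univ_castSucc g)
  rw [hg, add_comm] at h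
  exact add_right_cancel h

section Margins

variable {ι κ : Type*} [Fintype ι] [Fintype κ]

structure HasZeroMargins (w : ι → ℝ) (D : ι → κ → ℝ) : Prop where
  row_sum : ∀ i, ∑ j, D i j = 0
  col_sum : ∀ j, ∑ i, w i * D i j = 0

theorem exists_ne_sameSupport_sameMargins_iff {w : ι → ℝ} {Y : ι → κ → ℝ} (hY : ∀ i j, 0 ≤ Y i j) :
    (∃ Y' : ι → κ → ℝ, Y' ≠ Y ∧ (∀ i j, 0 ≤ Y' i j) ∧ (∀ i j, 0 < Y' i j ↔ 0 < Y i j) ∧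
        (∀ i, ∑ j, Y' i j = ∑ j, Y i j) ∧ (∀ j, ∑ i, w i * Y' i j = ∑ i, w i * Y i j)) ↔
      ∃ D : ι → κ → ℝ, D ≠ 0 ∧ (∀ i j, D i j ≠ 0 → 0 < Y i j) ∧ HasZeroMargins w D := by
  constructor
  · rintro ⟨Y', hne, hY', hsupp, hrow, hcol⟩
    refine ⟨Y' - Y, sub_ne_zero.2 hne, fun i j hD => ?_, ⟨fun i => ?_, fun j => ?_⟩⟩
    · by_contra hYij
      have hY'ij : ¬ 0 < Y' i j := (hsupp i j).not.2 hYij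
      exact hD (by simp only [Pi.sub_apply]; linarith [hY i j, hY' i j])
    · simp only [Pi.sub_apply, sum_sub_distrib, hrow, sub_self]
    · simp only [Pi.sub_apply, mul_sub, sum_sub_distrib, hcol, sub_self]
  · rintro ⟨D, hD, hsupp, hmarg⟩
    obtain ⟨c, hc, hpos⟩ := exists_pos_forall_pos_add_mul (fun p : ι × κ => Y p.1 p.2)
      (fun p => D p.1 p.2)
    have hYD : ∀ i j, 0 ≤ Y i j + c * D i j ∧ (0 < Y i j + c * D i j ↔ 0 < Y i j) := by
      intro i j
      by_cases hDij : D i j = 0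
      · simp [hDij, hY i j]
      · have := hpos (i, j) (hsupp i j hDij)
        exact ⟨this.le, iff_of_true this (hsupp i j hDij)⟩
    refine ⟨fun i j => Y i j + c * D i j, fun h => hD ?_, fun i j => (hYD i j).1,
      fun i j => (hYD i j).2, fun i => ?_, fun j => ?_⟩
    · ext i j
      simpa [hc.ne'] using congrFun (congrFun h i) j
    · simp only [sum_add_distrib, ← mul_sum, hmarg.row_sum, mul_zero, add_zero]
    · simp only [mul_add, mul_left_comm (w _) c, sum_add_distrib, ← mul_sum, hmarg.col_sum,
        mul_zero, add_zero]

end Margins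

section Incidence

variable {ι κ : Type*} [DecidableEq ι] [DecidableEq κ] {ℓ : ℕ} (v : Fin (ℓ + 1) → κ) (e : Fin ℓ → ι)

def cycleIncidence (i : ι) (j : κ) : ℝ :=
  ∑ k, if e k = i then (if v k.castSucc = j then 1 else 0) - (if v k.succ = j then 1 else 0) else 0

lemma sum_cycleIncidence_row [Fintype κ] (i : ι) : ∑ j, cycleIncidence v e i j = 0 := by
  unfold cycleIncidence
  rw [sum_comm]
  refine sum_eq_zero fun k _ => ?_
  split_ifs <;> simp [sum_sub_distrib]

lemma sum_cycleIncidence_col [Fintype ι] (hv : v (Fin.last ℓ) = v 0) (j : κ) :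
    ∑ i, cycleIncidence v e i j = 0 := by
  unfold cycleIncidence
  rw [sum_comm]
  simp only [sum_ite_eq, mem_univ, if_true, sum_sub_distrib]
  rw [Fin.sum_univ_succ_eq_sum_castSucc (g := fun x => if v x = j then (1 : ℝ) else 0)
    (by simp only [hv]), sub_self]

lemma cycleIncidence_apply_edge (he : Function.Injective e) (k : Fin ℓ) (j : κ) :
    cycleIncidence v e (e k) j =
      (if v k.castSucc = j then 1 else 0) - (if v k.succ = j then 1 else 0) := by
  unfold cycleIncidence
  rw [sum_eq_single k (fun k' _ hk' => if_neg (he.ne hk')) (by simp), if_pos rfl]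

lemma exists_of_cycleIncidence_ne_zero {i : ι} {j : κ} (h : cycleIncidence v e i j ≠ 0) :
    ∃ k, e k = i ∧ (v k.castSucc = j ∨ v k.succ = j) := by
  obtain ⟨k, -, hk⟩ := exists_ne_zero_of_sum_ne_zero h
  refine ⟨k, ?_⟩
  split_ifs at hk <;> simp_all

lemma cycleIncidence_ne_zero (he : Function.Injective e) {k : Fin ℓ}
    (hk : v k.castSucc ≠ v k.succ) : cycleIncidence v e ≠ 0 := fun h => by
  simpa [cycleIncidence_apply_edge v e he, hk.symm] using congrFun (congrFun h (e k)) (v k.castSucc)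

lemma hasZeroMargins_cycleIncidence_div [Fintype ι] [Fintype κ] {w : ι → ℝ} (hw : ∀ i, w i ≠ 0)
    (hv : v (Fin.last ℓ) = v 0) : HasZeroMargins w fun i j => cycleIncidence v e i j / w i where
  row_sum i := by rw [← sum_div, sum_cycleIncidence_row, zero_div]
  col_sum j := by simp only [mul_div_cancel₀ _ (hw _), sum_cycleIncidence_col v e hv]

end Incidence

lemma apply_castSucc_ne_apply_succ {κ : Type*} {ℓ : ℕ} {v : Fin (ℓ + 1) → κ} (hℓ : 2 ≤ ℓ)
    (hv : v (Fin.last ℓ) = v 0) (hinj : ∀ k k' : Fin ℓ, v k.castSucc = v k'.castSucc → k = k')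
    (k : Fin ℓ) : v k.castSucc ≠ v k.succ := by
  intro h
  rcases Fin.eq_castSucc_or_eq_last k.succ with ⟨k', hk'⟩ | hlast
  · rw [hk'] at h
    exact (Fin.castSucc_lt_succ (i := k)).ne (by rw [hk', hinj _ _ h])
  · rw [hlast, hv] at h
    have hk0 : k.val = 0 := congrArg Fin.val (hinj k ⟨0, by omega⟩ h)
    have hkl : k.val + 1 = ℓ := congrArg Fin.val hlast
    omega

theorem SupportHasSimpleCycle.exists_hasZeroMargins {M N : ℕ} {Y : Fin M → Fin N → ℝ}
    {w : Fin M → ℝ} (hw : ∀ i, w i ≠ 0) (h : SupportHasSimpleCycle Y) :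
    ∃ D : Fin M → Fin N → ℝ, D ≠ 0 ∧ (∀ i j, D i j ≠ 0 → 0 < Y i j) ∧ HasZeroMargins w D := by
  obtain ⟨ℓ, hℓ, v, e, hv, hvinj, he, hpos⟩ := h
  refine ⟨fun i j => cycleIncidence v e i j / w i, fun hD => ?_, fun i j hD => ?_,
    hasZeroMargins_cycleIncidence_div v e hw hv⟩
  · refine cycleIncidence_ne_zero v e he (apply_castSucc_ne_apply_succ hℓ hv hvinj ⟨0, by omega⟩) ?_
    ext i j
    simpa [hw i] using congrFun (congrFun hD i) j
  · obtain ⟨k, rfl, rfl | rfl⟩ := exists_of_cycleIncidence_ne_zero v e (left_ne_zero_of_mul hD)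
    exacts [(hpos k).1, (hpos k).2]

section Walk

variable {ι κ : Type*} (R S : ι → κ → Prop)

/-- Rows play the role of hyperedges and columns that of vertices; only `v` on `[0, ℓ]` and `e` on
`[0, ℓ)` matter. -/
structure IsClosedWalk (ℓ : ℕ) (v : ℕ → κ) (e : ℕ → ι) : Prop where
  closed : v ℓ = v 0
  left : ∀ k < ℓ, R (e k) (v k)
  right : ∀ k < ℓ, S (e k) (v (k + 1))

structure IsSimpleCycle (ℓ : ℕ) (v : ℕ → κ) (e : ℕ → ι) : Prop extends IsClosedWalk R S ℓ v e where
  two_le : 2 ≤ ℓ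
  injOn_vertex : Set.InjOn v (Set.Iio ℓ)
  injOn_edge : Set.InjOn e (Set.Iio ℓ)

variable {R S}

lemma exists_isClosedWalk [Finite ι] [Finite κ] (h₀ : ∃ i j, R i j)
    (hR : ∀ i j, R i j → ∃ j', S i j') (hS : ∀ i j, S i j → ∃ i', R i' j) :
    ∃ ℓ > 0, ∃ v e, IsClosedWalk R S ℓ v e := by
  have hstep (p : {p : ι × κ // R p.1 p.2}) :
      ∃ q : {p : ι × κ // R p.1 p.2}, S p.1.1 q.1.2 := by
    obtain ⟨j', hj'⟩ := hR _ _ p.2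
    obtain ⟨i', hi'⟩ := hS _ _ hj'
    exact ⟨⟨(i', j'), hi'⟩, hj'⟩
  choose f hf using hstep
  obtain ⟨i₀, j₀, h₀⟩ := h₀
  have : Nonempty {p : ι × κ // R p.1 p.2} := ⟨⟨(i₀, j₀), h₀⟩⟩
  obtain ⟨p, ℓ, hℓ, hp⟩ := f.exists_iterate_eq_self_of_finite
  refine ⟨ℓ, hℓ, fun k => (f^[k] p).1.2, fun k => (f^[k] p).1.1,
    ⟨by simp only [hp, iterate_zero, id], fun k _ => (f^[k] p).2, fun k _ => ?_⟩⟩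
  simpa only [iterate_succ_apply'] using hf (f^[k] p)

namespace IsClosedWalk

lemma segment {ℓ : ℕ} {v : ℕ → κ} {e : ℕ → ι} (h : IsClosedWalk R S ℓ v e) {s t : ℕ}
    (ht : t ≤ ℓ) (hv : v s = v t) :
    IsClosedWalk R S (t - s) (fun k => v (k + s)) (fun k => e (k + s)) where
  closed := by
    rcases le_total s t with hst | hts
    · simp [Nat.sub_add_cancel hst, hv]
    · simp [Nat.sub_eq_zero_of_le hts]
  left k hk := h.left _ (by omega)
  right k hk := by simpa only [Nat.add_right_comm] using h.right (k + s) (by omega)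

lemma shortcut {ℓ : ℕ} {v : ℕ → κ} {e : ℕ → ι} (h : IsClosedWalk R S ℓ v e) {a b : ℕ}
    (hab : a < b) (hb : b < ℓ) (he : e a = e b) :
    IsClosedWalk R S (ℓ - (b - a)) (fun k => if k ≤ a then v k else v (k + (b - a)))
      (fun k => if k ≤ a then e k else e (k + (b - a))) where
  closed := by
    simp only [if_neg (show ¬ ℓ - (b - a) ≤ a by omega), if_pos (Nat.zero_le a),
      Nat.sub_add_cancel (show b - a ≤ ℓ by omega), h.closed]
  left k hk := by
    split_ifs
    exacts [h.left k (by omega), h.left _ (by omega)]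
  right k hk := by
    rcases lt_trichotomy k a with hka | rfl | hka
    · simp only [if_pos hka.le, if_pos (show k + 1 ≤ a by omega)]
      exact h.right k (by omega)
    · simp only [le_refl, if_true, if_neg (show ¬ k + 1 ≤ k by omega), he,
        show k + 1 + (b - k) = b + 1 by omega]
      exact h.right b hb
    · simp only [if_neg (show ¬ k ≤ a by omega), if_neg (show ¬ k + 1 ≤ a by omega),
        Nat.add_right_comm k 1]
      exact h.right _ (by omega)

/-- A shortest closed walk is simple: a repeated vertex cuts out a shorter closed segment, and a
repeated edge `e a = e b` lets the walk jump from `v a` straight to `v (b + 1)`. -/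
lemma exists_isSimpleCycle (hRS : ∀ i j, R i j → ¬ S i j) {ℓ : ℕ} {v : ℕ → κ} {e : ℕ → ι}
    (h : IsClosedWalk R S ℓ v e) (hℓ : 0 < ℓ) : ∃ ℓ v e, IsSimpleCycle R S ℓ v e := by
  induction ℓ using Nat.strong_induction_on generalizing v e with
  | _ ℓ ih =>
  by_contra hnot
  have hv : Set.InjOn v (Set.Iio ℓ) := by
    intro s hs t ht hst
    by_contra hne
    wlog hlt : s < t generalizing s t
    · exact this ht hs hst.symm (Ne.symm hne) (by omega)
    exact hnot (ih _ (by simp only [Set.mem_Iio] at ht; omega) (h.segment ht.out.le hst) (by omega))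
  have he : Set.InjOn e (Set.Iio ℓ) := by
    intro a ha b hb hab
    by_contra hne
    wlog hlt : a < b generalizing a b
    · exact this hb ha hab.symm (Ne.symm hne) (by omega)
    simp only [Set.mem_Iio] at hb
    exact hnot (ih _ (by omega) (h.shortcut hlt hb hab) (by omega))
  have h2 : 2 ≤ ℓ := by
    by_contra hlt
    obtain rfl : ℓ = 1 := by omega
    exact hRS _ _ (h.left 0 one_pos) (h.closed ▸ h.right 0 one_pos)
  exact hnot ⟨ℓ, v, e, h, h2, hv, he⟩

end IsClosedWalk

end Walk

lemma IsSimpleCycle.supportHasSimpleCycle {M N : ℕ} {Y : Fin M → Fin N → ℝ}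
    {R S : Fin M → Fin N → Prop} {ℓ : ℕ} {v : ℕ → Fin N} {e : ℕ → Fin M}
    (h : IsSimpleCycle R S ℓ v e) (hR : ∀ i j, R i j → 0 < Y i j) (hS : ∀ i j, S i j → 0 < Y i j) :
    SupportHasSimpleCycle Y :=
  ⟨ℓ, h.two_le, fun k => v k, fun k => e k, h.closed,
    fun k k' hkk' => Fin.ext (h.injOn_vertex k.2 k'.2 hkk'),
    fun k k' hkk' => Fin.ext (h.injOn_edge k.2 k'.2 hkk'),
    fun k => ⟨hR _ _ (h.left k k.2), hS _ _ (h.right k k.2)⟩⟩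

lemma HasZeroMargins.exists_isSimpleCycle {ι κ : Type*} [Fintype ι] [Fintype κ] {w : ι → ℝ}
    {D : ι → κ → ℝ} (hD : HasZeroMargins w D) (hw : ∀ i, 0 < w i) (hD0 : D ≠ 0) :
    ∃ ℓ v e, IsSimpleCycle (fun i j => D i j < 0) (fun i j => 0 < D i j) ℓ v e := by
  have hneg (i : ι) (j : κ) (hij : 0 < D i j) : ∃ j', D i j' < 0 :=
    exists_neg_of_sum_eq_zero (hD.row_sum i) hij
  have h₀ : ∃ i j, D i j < 0 := by
    obtain ⟨i, j, hij⟩ : ∃ i j, D i j ≠ 0 := by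
      by_contra! h
      exact hD0 (funext fun i => funext (h i))
    rcases hij.lt_or_gt with hlt | hgt
    exacts [⟨i, j, hlt⟩, ⟨i, hneg i j hgt⟩]
  have hR (i : ι) (j : κ) (hij : D i j < 0) : ∃ j', 0 < D i j' := by
    obtain ⟨j', -, hj'⟩ :=
      exists_pos_of_sum_zero_of_exists_nonzero _ (hD.row_sum i) ⟨j, mem_univ j, hij.ne⟩
    exact ⟨j', hj'⟩
  have hS (i : ι) (j : κ) (hij : 0 < D i j) : ∃ i', D i' j < 0 := by
    obtain ⟨i', hi'⟩ := exists_neg_of_sum_eq_zero (hD.col_sum j) (mul_pos (hw i) hij)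
    exact ⟨i', neg_of_mul_neg_right hi' (hw i').le⟩
  obtain ⟨ℓ, hℓ, v, e, hwalk⟩ := exists_isClosedWalk h₀ hR hS
  exact hwalk.exists_isSimpleCycle (fun i j h h' => h.not_gt h') hℓ

/-- The support hypergraph of an entrywise nonnegative matrix `Y` with positive row
weights `m` contains a simple cycle iff `Y` is not uniquely determined by its support,
row sums and weighted column sums. -/
theorem supportHasSimpleCycle_iff {M N : ℕ} (m : Fin M → ℕ) (hm : ∀ i, 1 ≤ m i)
    (Y : Fin M → Fin N → ℝ) (hY : ∀ i j, 0 ≤ Y i j) :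
    SupportHasSimpleCycle Y ↔
      ∃ Y' : Fin M → Fin N → ℝ, Y' ≠ Y ∧ (∀ i j, 0 ≤ Y' i j) ∧
        (∀ i j, 0 < Y' i j ↔ 0 < Y i j) ∧
        (∀ i, ∑ j, Y' i j = ∑ j, Y i j) ∧
        (∀ j, ∑ i, (m i : ℝ) * Y' i j = ∑ i, (m i : ℝ) * Y i j) := by
  have hw : ∀ i, (0 : ℝ) < m i := fun i => Nat.cast_pos.2 (hm i)
  refine Iff.trans ?_ (exists_ne_sameSupport_sameMargins_iff (w := fun i => (m i : ℝ)) hY).symm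
  refine ⟨fun h => h.exists_hasZeroMargins fun i => (hw i).ne', ?_⟩
  rintro ⟨D, hD0, hsupp, hD⟩
  obtain ⟨ℓ, v, e, hcycle⟩ := hD.exists_isSimpleCycle hw hD0
  exact hcycle.supportHasSimpleCycle (fun i j h => hsupp i j h.ne) fun i j h => hsupp i j h.ne'
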